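/- Let γ denote the standard Gaussian measure on ℝ^d (density x ↦ (2π)^(−d/2)·exp(−‖x‖²/2) with respect to Lebesgue measure on EuclideanSpace ℝ (Fin d)). Then for every x ∈ ℝ^d and every r > 0, exp(−‖x‖²/2) · γ(B(0,r)) ≤ γ(B(x,r)) ≤ γ(B(0,r)), where B(y,r) denotes the Euclidean ball of center y and radius r. -/

import Mathlib

/-!
Both bounds come from the change of variables `y ↦ x ± y`, which preserves Lebesgue measure.
For the lower bound, the ball `B(0,r)` is symmetric, so `γ(B(x,r))` is the integral over `B(0,r)` of
the average of `φ(x + y)` and `φ(x - y)`; by the parallelogram law and convexity of `exp` this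
average is at least `exp(-‖x‖²/2) φ(y)`.
For the upper bound (a special case of Anderson's inequality), `y ↦ x - y` maps `B(0,r)` onto
`B(x,r)` and `B(0,r) ∩ B(x,r)` onto itself, while on `B(0,r) \ B(x,r)` it can only increase the
norm, since `‖x - y‖ ≥ r > ‖y‖` there; so it can only decrease the radially decreasing density.
-/

open MeasureTheory Real

/-- Standard Gaussian density on `ℝ^d`. -/
noncomputable def stdGaussianDensity (d : ℕ) (x : EuclideanSpace ℝ (Fin d)) : ℝ :=
  (2 * π) ^ (-(d : ℝ) / 2) * Real.exp (-‖x‖ ^ 2 / 2)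

/-- Standard Gaussian measure on `ℝ^d`: density `(2π)^{−d/2}·exp(−‖x‖²/2)` with
respect to Lebesgue measure. -/
noncomputable def stdGaussianMeasure (d : ℕ) : Measure (EuclideanSpace ℝ (Fin d)) :=
  volume.withDensity fun x => ENNReal.ofReal (stdGaussianDensity d x)

open scoped ENNReal Pointwise
open Metric

section ShiftedSets

variable {E : Type*} [NormedAddCommGroup E] [MeasurableSpace E] [BorelSpace E]
  {μ : Measure E} [μ.IsAddLeftInvariant] {f : E → ℝ≥0∞}

theorem setLIntegral_vadd_eq (x : E) (S : Set E) :
    ∫⁻ y in x +ᵥ S, f y ∂μ = ∫⁻ y in S, f (x + y) ∂μ := by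
  rw [← Set.image_vadd, ((measurePreserving_add_left μ x).setLIntegral_comp_emb
    (measurableEmbedding_addLeft x) f S)]
  rfl

variable [μ.IsNegInvariant]

theorem setLIntegral_vadd_eq_of_neg_eq (x : E) {S : Set E} (hS : -S = S) :
    ∫⁻ y in x +ᵥ S, f y ∂μ = ∫⁻ y in S, f (x - y) ∂μ := by
  rw [setLIntegral_vadd_eq, ← (Measure.measurePreserving_neg μ).setLIntegral_comp_preimage_emb
    measurableEmbedding_neg (fun y => f (x + y)) S, Set.neg_preimage, hS]
  simp only [sub_eq_add_neg]

theorem mul_setLIntegral_le_setLIntegral_vadd (hf : Measurable f) (x : E) {S : Set E}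
    (hS : -S = S) {c : ℝ≥0∞} (hc : ∀ y, 2 * (c * f y) ≤ f (x + y) + f (x - y)) :
    c * ∫⁻ y in S, f y ∂μ ≤ ∫⁻ y in x +ᵥ S, f y ∂μ := by
  have key : 2 * (c * ∫⁻ y in S, f y ∂μ) ≤ 2 * ∫⁻ y in x +ᵥ S, f y ∂μ :=
    calc 2 * (c * ∫⁻ y in S, f y ∂μ) = ∫⁻ y in S, 2 * (c * f y) ∂μ := by
          rw [lintegral_const_mul _ (hf.const_mul c), lintegral_const_mul _ hf]
      _ ≤ ∫⁻ y in S, (f (x + y) + f (x - y)) ∂μ := lintegral_mono hc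
      _ = ∫⁻ y in x +ᵥ S, f y ∂μ + ∫⁻ y in x +ᵥ S, f y ∂μ := by
          rw [lintegral_add_left (f := fun y => f (x + y)) (by fun_prop),
            ← setLIntegral_vadd_eq, ← setLIntegral_vadd_eq_of_neg_eq x hS]
      _ = 2 * ∫⁻ y in x +ᵥ S, f y ∂μ := (two_mul _).symm
  exact (ENNReal.mul_le_mul_iff_right two_ne_zero ENNReal.ofNat_ne_top).1 key

theorem setLIntegral_ball_le_setLIntegral_ball_zero
    (hf : ∀ y z, ‖y‖ ≤ ‖z‖ → f z ≤ f y) (x : E) (r : ℝ) :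
    ∫⁻ y in ball x r, f y ∂μ ≤ ∫⁻ y in ball 0 r, f y ∂μ := by
  have hmp := Measure.measurePreserving_sub_left μ x
  have hemb : MeasurableEmbedding (x - ·) := (MeasurableEquiv.subLeft x).measurableEmbedding
  have hpre₀ : (x - ·) ⁻¹' ball 0 r = ball x r := by
    ext y; simp [dist_eq_norm, norm_sub_rev]
  have hpreₓ : (x - ·) ⁻¹' ball x r = ball 0 r := by
    ext y; simp [dist_eq_norm]
  calc ∫⁻ y in ball x r, f y ∂μ
      = ∫⁻ y in ball 0 r, f (x - y) ∂μ := by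
        rw [← hmp.setLIntegral_comp_preimage_emb hemb, hpreₓ]
    _ = ∫⁻ y in ball 0 r ∩ ball x r, f (x - y) ∂μ + ∫⁻ y in ball 0 r \ ball x r, f (x - y) ∂μ :=
        (lintegral_inter_add_sdiff _ _ measurableSet_ball).symm
    _ ≤ ∫⁻ y in ball 0 r ∩ ball x r, f y ∂μ + ∫⁻ y in ball 0 r \ ball x r, f y ∂μ := by
        refine add_le_add (le_of_eq ?_) (setLIntegral_mono' (measurableSet_ball.diff
          measurableSet_ball) fun y ⟨hy₀, hyₓ⟩ => hf _ _ ?_)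
        · rw [← hmp.setLIntegral_comp_preimage_emb hemb f, Set.preimage_inter, hpre₀, hpreₓ,
            Set.inter_comm (ball x r)]
        · rw [mem_ball_zero_iff] at hy₀
          rw [mem_ball, dist_eq_norm, not_lt] at hyₓ
          rw [norm_sub_rev]; linarith
    _ = ∫⁻ y in ball 0 r, f y ∂μ := lintegral_inter_add_sdiff _ _ measurableSet_ball

end ShiftedSets

theorem two_mul_exp_neg_norm_sq_half_mul_le {F : Type*} [NormedAddCommGroup F]
    [InnerProductSpace ℝ F] (x y : F) :
    2 * (exp (-‖x‖ ^ 2 / 2) * exp (-‖y‖ ^ 2 / 2))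
      ≤ exp (-‖x + y‖ ^ 2 / 2) + exp (-‖x - y‖ ^ 2 / 2) := by
  have hmid := convexOn_exp.2 (Set.mem_univ (-‖x + y‖ ^ 2 / 2)) (Set.mem_univ (-‖x - y‖ ^ 2 / 2))
    (by norm_num : (0 : ℝ) ≤ 1 / 2) (by norm_num : (0 : ℝ) ≤ 1 / 2) (by norm_num)
  have hpar := parallelogram_law_with_norm ℝ x y
  rw [← exp_add]
  calc 2 * exp (-‖x‖ ^ 2 / 2 + -‖y‖ ^ 2 / 2)
      = 2 * exp ((1 / 2 : ℝ) • (-‖x + y‖ ^ 2 / 2) + (1 / 2 : ℝ) • (-‖x - y‖ ^ 2 / 2)) := by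
        congr 2; simp only [smul_eq_mul]; nlinarith
    _ ≤ exp (-‖x + y‖ ^ 2 / 2) + exp (-‖x - y‖ ^ 2 / 2) := by
        simp only [smul_eq_mul] at hmid ⊢; linarith

theorem measurable_stdGaussianDensity (d : ℕ) : Measurable (stdGaussianDensity d) := by
  unfold stdGaussianDensity; fun_prop

theorem stdGaussianDensity_nonneg {d : ℕ} (y : EuclideanSpace ℝ (Fin d)) :
    0 ≤ stdGaussianDensity d y := by
  unfold stdGaussianDensity; positivity

theorem stdGaussianDensity_le_of_norm_le {d : ℕ} {y z : EuclideanSpace ℝ (Fin d)}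
    (h : ‖y‖ ≤ ‖z‖) : stdGaussianDensity d z ≤ stdGaussianDensity d y := by
  unfold stdGaussianDensity
  gcongr

theorem two_mul_exp_mul_stdGaussianDensity_le {d : ℕ} (x y : EuclideanSpace ℝ (Fin d)) :
    2 * (exp (-‖x‖ ^ 2 / 2) * stdGaussianDensity d y)
      ≤ stdGaussianDensity d (x + y) + stdGaussianDensity d (x - y) := by
  unfold stdGaussianDensity
  have := mul_le_mul_of_nonneg_left (two_mul_exp_neg_norm_sq_half_mul_le x y)
    (rpow_nonneg (by positivity : (0 : ℝ) ≤ 2 * π) (-(d : ℝ) / 2))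
  linarith

theorem gaussian_shifted_ball_general (d : ℕ)
    (x : EuclideanSpace ℝ (Fin d)) (r : ℝ) :
    ENNReal.ofReal (Real.exp (-‖x‖ ^ 2 / 2)) * stdGaussianMeasure d (Metric.ball 0 r)
        ≤ stdGaussianMeasure d (Metric.ball x r) ∧
      stdGaussianMeasure d (Metric.ball x r) ≤ stdGaussianMeasure d (Metric.ball 0 r) := by
  simp only [stdGaussianMeasure, withDensity_apply _ measurableSet_ball]
  refine ⟨?_, setLIntegral_ball_le_setLIntegral_ball_zero
    (fun y z h => ENNReal.ofReal_le_ofReal (stdGaussianDensity_le_of_norm_le h)) x r⟩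
  rw [← vadd_ball_zero r x]
  refine mul_setLIntegral_le_setLIntegral_vadd (measurable_stdGaussianDensity d).ennreal_ofReal x
    (by rw [neg_ball, neg_zero]) fun y => ?_
  have h := ENNReal.ofReal_le_ofReal (two_mul_exp_mul_stdGaussianDensity_le x y)
  rwa [ENNReal.ofReal_mul zero_le_two, ENNReal.ofReal_mul (exp_pos _).le, ENNReal.ofReal_ofNat,
    ENNReal.ofReal_add (stdGaussianDensity_nonneg _) (stdGaussianDensity_nonneg _)] at h

/-- Gaussian shifted-ball inequality (equation (gaussian_shift)):
`e^{−‖x‖²/2}·γ(B(0,r)) ≤ γ(B(x,r)) ≤ γ(B(0,r))`. -/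
theorem gaussian_shifted_ball (d : ℕ) (hd : 1 ≤ d)
    (x : EuclideanSpace ℝ (Fin d)) (r : ℝ) (hr : 0 < r) :
    ENNReal.ofReal (Real.exp (-‖x‖ ^ 2 / 2)) * stdGaussianMeasure d (Metric.ball 0 r)
        ≤ stdGaussianMeasure d (Metric.ball x r) ∧
      stdGaussianMeasure d (Metric.ball x r) ≤ stdGaussianMeasure d (Metric.ball 0 r) :=
  gaussian_shifted_ball_general d x r
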